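/- Let 1 ≤ q < 3, β > 0, and set q₁ = z(q) = (1+q)/(3−q) and β*(q) = (3−q) / (8 β^{2−q} C_q^{2(q−1)}). Then for all ξ ∈ ℝ, F_q[G_q(β; ·)](ξ) = e_{q₁}^{ −β*(q) ξ² }, and β*(q) > 0. -/

import Mathlib

open MeasureTheory Filter Real Topology

/-- The `q`-exponential `e_q^x = [1 + (1-q)x]_+^{1/(1-q)}` (with `e_1^x = e^x`). -/
noncomputable def qExp (q x : ℝ) : ℝ :=
  if q = 1 then Real.exp x else (max (1 + (1 - q) * x) 0) ^ (1 / (1 - q))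

/-- The `q`-exponential of a complex argument, via the principal power. -/
noncomputable def qExpC (q : ℝ) (w : ℂ) : ℂ :=
  if q = 1 then Complex.exp w else (1 + (1 - (q : ℂ)) * w) ^ ((1 : ℂ) / (1 - (q : ℂ)))

/-- The `q`-product on complex numbers, via principal powers. -/
noncomputable def qProdC (q : ℝ) (x y : ℂ) : ℂ :=
  if q = 1 then x * y
  else (x ^ ((1 : ℂ) - (q : ℂ)) + y ^ ((1 : ℂ) - (q : ℂ)) - 1) ^ ((1 : ℂ) / (1 - (q : ℂ)))

/-- The normalizing constant `C_q = ∫ e_q^{-x²} dx`. -/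
noncomputable def qC (q : ℝ) : ℝ := ∫ x : ℝ, qExp q (-x ^ 2)

/-- The `q`-Gaussian `G_q(β; x) = (√β / C_q) e_q^{-βx²}`. -/
noncomputable def qGaussian (q β x : ℝ) : ℝ := (Real.sqrt β / qC q) * qExp q (-(β * x ^ 2))

/-- The `q`-Fourier transform `F_q[f](ξ) = ∫ f(x) e_q^{i x ξ f(x)^{q-1}} dx`. -/
noncomputable def qFourier (q : ℝ) (f : ℝ → ℝ) (ξ : ℝ) : ℂ :=
  ∫ x : ℝ, (f x : ℂ) * qExpC q (Complex.I * (x : ℂ) * (ξ : ℂ) * ((f x ^ (q - 1) : ℝ) : ℂ))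

/-- The `q`-mean `μ_q(f) = ∫ x f(x)^q dx / ∫ f(x)^q dx`. -/
noncomputable def qMean (q : ℝ) (f : ℝ → ℝ) : ℝ :=
  (∫ x : ℝ, x * f x ^ q) / (∫ x : ℝ, f x ^ q)

/-- The `q`-variance `σ_q²(f) = ∫ (x-μ_q(f))² f(x)^q dx / ∫ f(x)^q dx`. -/
noncomputable def qVar (q : ℝ) (f : ℝ → ℝ) : ℝ :=
  (∫ x : ℝ, (x - qMean q f) ^ 2 * f x ^ q) / (∫ x : ℝ, f x ^ q)

/-- Iterated `q`-product `w ⊗_q ⋯ ⊗_q w` (`N` factors). -/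
noncomputable def qProdPow (q : ℝ) (w : ℂ) : ℕ → ℂ
  | 0 => 1
  | 1 => w
  | n + 2 => qProdC q w (qProdPow q w (n + 1))

/-- `z(s) = (1+s)/(3-s)`. -/
noncomputable def zmap (s : ℝ) : ℝ := (1 + s) / (3 - s)

/-- The inverse of `z`: `z⁻¹(t) = (3t-1)/(1+t)`. -/
noncomputable def zinvmap (t : ℝ) : ℝ := (3 * t - 1) / (1 + t)

/-!
For `q > 1` put `r = q - 1`, `c = √β / C_q` and `u = 1 + rβx²`, so that `G_q(β; x) = c u^{-1/r}`
and `G_q(β; x)^{q-1} = c^r / u`. The base of the `q`-exponential is then `(u - ikx) / u` with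
`k = r c^r ξ`, and its factor `u^{1/r}` cancels the Gaussian: the integrand is
`c (1 + rβx² - ikx)^{-1/r} = c (D + rβ(x - iμ)²)^{-1/r}` with `μ = k / (2rβ)` and
`D = 1 + rβμ²`. Since `D - rβμ² = 1 > 0`, the function `z ↦ (D + rβz²)^{-1/r}` is holomorphic
and, together with its derivative, dominated by an integrable function of `Re z` on a horizontal
strip containing `ℝ` and `ℝ - iμ`, so the line of integration can be moved back to `ℝ`. A linear
substitution turns `∫ (D + rβx²)^{-1/r}` into `√(D/β) D^{-1/r} C_q`, hence
`F_q[G_q(β; ·)](ξ) = D^{1/2 - 1/r}`; finally `1/2 - 1/r = 1/(1 - z(q))` and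
`D = 1 + (z(q) - 1) β* ξ²`.
For `q = 1` this is the classical Fourier transform of the Gaussian.
-/

section

open Complex

lemma Complex.norm_cpow_neg_le {w : ℂ} {m p : ℝ} (hm : 0 < m) (hw : m ≤ w.re) (hp : 0 ≤ p) :
    ‖w ^ (-(p : ℂ))‖ ≤ m ^ (-p) := by
  rw [← ofReal_neg, norm_cpow_real]
  exact Real.rpow_le_rpow_of_nonpos hm (hw.trans (re_le_norm w)) (by linarith)

lemma Complex.norm_le_of_sq_im_le {z : ℂ} {M : ℝ} (h : z.im ^ 2 ≤ M) :
    ‖z‖ ≤ (1 + M) * (1 + z.re ^ 2) := by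
  have h1 : ‖z‖ ≤ 1 + ‖z‖ ^ 2 := by nlinarith [sq_nonneg (‖z‖ - 1)]
  have h2 : ‖z‖ ^ 2 = z.re ^ 2 + z.im ^ 2 := by rw [Complex.sq_norm, normSq_apply]; ring
  nlinarith [sq_nonneg z.re, sq_nonneg z.im]

lemma Complex.ofReal_mul_cpow {a : ℝ} (ha : 0 < a) {z : ℂ} (hz : z ≠ 0) (s : ℂ) :
    ((a : ℂ) * z) ^ s = (a : ℂ) ^ s * z ^ s := by
  have ha' : (a : ℂ) ≠ 0 := ofReal_ne_zero.2 ha.ne'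
  rw [cpow_def_of_ne_zero (mul_ne_zero ha' hz), cpow_def_of_ne_zero ha', cpow_def_of_ne_zero hz,
    log_ofReal_mul ha hz, ← exp_add, ← ofReal_log ha.le, add_mul]

lemma integrable_one_add_sq_rpow_neg {p : ℝ} (hp : 1 / 2 < p) :
    Integrable fun x : ℝ ↦ (1 + x ^ 2) ^ (-p) := by
  have := integrable_rpow_neg_one_add_norm_sq (E := ℝ) (μ := volume) (r := 2 * p)
    (by simp only [Module.finrank_self, Nat.cast_one]; linarith)
  simpa [neg_div, mul_div_cancel_left₀] using this

lemma integrable_one_add_mul_sq_rpow_neg {B p : ℝ} (hB : 0 < B) (hp : 1 / 2 < p) :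
    Integrable fun x : ℝ ↦ (1 + B * x ^ 2) ^ (-p) := by
  have := (integrable_one_add_sq_rpow_neg hp).comp_mul_left' (Real.sqrt_ne_zero'.2 hB)
  simpa [mul_pow, Real.sq_sqrt hB.le] using this

theorem integral_add_mul_I_eq_of_differentiableOn {f : ℂ → ℂ} {U : Set ℝ} (hU : IsOpen U)
    {s : ℝ} (hs : Set.uIcc 0 s ⊆ U) (hf : DifferentiableOn ℂ f (im ⁻¹' U)) {g g' : ℝ → ℝ}
    (hg : Integrable g) (hg' : Integrable g') (hfg : ∀ z : ℂ, z.im ∈ U → ‖f z‖ ≤ g z.re)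
    (hfg' : ∀ z : ℂ, z.im ∈ U → ‖deriv f z‖ ≤ g' z.re) :
    ∫ x : ℝ, f (x + s * I) = ∫ x : ℝ, f x := by
  have hopen : IsOpen (im ⁻¹' U) := hU.preimage continuous_im
  have hline : ∀ t ∈ U, ∀ x : ℝ, (x + t * I : ℂ) ∈ im ⁻¹' U := by simp
  have hcont : ∀ t ∈ U, Continuous fun x : ℝ ↦ f (x + t * I) := fun t ht ↦
    hf.continuousOn.comp_continuous (by fun_prop) (hline t ht)
  have hcont' : ∀ t ∈ U, Continuous fun x : ℝ ↦ deriv f (x + t * I) := fun t ht ↦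
    (hf.analyticOnNhd hopen).deriv.continuousOn.comp_continuous (by fun_prop) (hline t ht)
  have hint : ∀ t ∈ U, Integrable fun x : ℝ ↦ f (x + t * I) := fun t ht ↦
    hg.mono' (hcont t ht).aestronglyMeasurable
      (.of_forall fun x ↦ by simpa using hfg _ (hline t ht x))
  have hint' : ∀ t ∈ U, Integrable fun x : ℝ ↦ deriv f (x + t * I) := fun t ht ↦
    hg'.mono' (hcont' t ht).aestronglyMeasurable
      (.of_forall fun x ↦ by simpa using hfg' _ (hline t ht x))
  have hderiv : ∀ z ∈ im ⁻¹' U, HasDerivAt f (deriv f z) z := fun z hz ↦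
    (hf.differentiableAt (hopen.mem_nhds hz)).hasDerivAt
  -- The `t`-derivative of `f (x + t * I)` is `I` times its `x`-derivative, which integrates to `0`.
  have hzero : ∀ t ∈ U, HasDerivAt (fun t : ℝ ↦ ∫ x : ℝ, f (x + t * I)) 0 t := by
    intro t₀ ht₀
    obtain ⟨ε, hε, hball⟩ := Metric.isOpen_iff.1 hU t₀ ht₀
    have hdt : ∀ x t : ℝ, t ∈ U →
        HasDerivAt (fun t : ℝ ↦ f (x + t * I)) (deriv f (x + t * I) * I) t := fun x t ht ↦ by
      have hlin : HasDerivAt (fun w : ℂ ↦ (x : ℂ) + w * I) I (t : ℂ) := by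
        simpa using ((hasDerivAt_id (t : ℂ)).mul_const I).const_add (x : ℂ)
      exact ((hderiv _ (hline t ht x)).comp (t : ℂ) hlin).comp_ofReal
    have hdx : ∀ x : ℝ, HasDerivAt (fun x : ℝ ↦ f (x + t₀ * I)) (deriv f (x + t₀ * I)) x :=
      fun x ↦ ((hderiv _ (hline t₀ ht₀ x)).comp_add_const _ _).comp_ofReal
    have hderiv_integral := hasDerivAt_integral_of_dominated_loc_of_deriv_le (x₀ := t₀)
      (F' := fun t x ↦ deriv f (x + t * I) * I) (Metric.ball_mem_nhds t₀ hε)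
      (Filter.eventually_of_mem (hU.mem_nhds ht₀) fun t ht ↦ (hcont t ht).aestronglyMeasurable)
      (hint t₀ ht₀) ((hcont' t₀ ht₀).mul continuous_const).aestronglyMeasurable
      (.of_forall fun x t ht ↦ by simpa using hfg' _ (hline t (hball ht) x)) hg'
      (.of_forall fun x t ht ↦ hdt x t (hball ht))
    simpa [integral_mul_const, integral_eq_zero_of_hasDerivAt_of_integrable hdx (hint' t₀ ht₀)
      (hint t₀ ht₀)] using hderiv_integral.2
  have := intervalIntegral.integral_eq_sub_of_hasDerivAt (fun t ht ↦ hzero t (hs ht))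
    (intervalIntegrable_const (c := (0 : ℂ)))
  simpa [sub_eq_zero] using this.symm

lemma Complex.re_ofReal_add_ofReal_mul_sq (D A : ℝ) (z : ℂ) :
    ((D : ℂ) + A * z ^ 2).re = D + A * z.re ^ 2 - A * z.im ^ 2 := by
  simp only [sq, add_re, ofReal_re, mul_re, ofReal_im, mul_im, zero_mul, sub_zero]
  ring

lemma norm_deriv_cpow_add_mul_sq_le {A D p κ M : ℝ} {z : ℂ} (hA : 0 < A) (hp : 0 < p)
    (hκ : 0 < κ) (hre : κ * (1 + z.re ^ 2) ≤ ((D : ℂ) + A * z ^ 2).re) (hM : z.im ^ 2 ≤ M) :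
    ‖-(p : ℂ) * ((D : ℂ) + A * z ^ 2) ^ (-(p : ℂ) - 1) * (A * (2 * z))‖ ≤
      2 * p * A * (1 + M) * κ ^ (-(p + 1)) * (1 + z.re ^ 2) ^ (-p) := by
  have hx : 0 < 1 + z.re ^ 2 := by positivity
  calc ‖-(p : ℂ) * ((D : ℂ) + A * z ^ 2) ^ (-(p : ℂ) - 1) * (A * (2 * z))‖
      = p * ‖((D : ℂ) + A * z ^ 2) ^ (-((p + 1 : ℝ) : ℂ))‖ * (2 * A * ‖z‖) := by
        simp only [neg_mul, norm_neg, Complex.norm_mul, norm_real, norm_eq_abs, abs_of_pos hA,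
          abs_of_pos hp, Complex.norm_ofNat, ofReal_add, ofReal_one, neg_add_rev]
        ring_nf
    _ ≤ p * (κ * (1 + z.re ^ 2)) ^ (-(p + 1)) * (2 * A * ((1 + M) * (1 + z.re ^ 2))) := by
        gcongr
        · exact norm_cpow_neg_le (by positivity) hre (by linarith)
        · exact norm_le_of_sq_im_le hM
    _ = 2 * p * A * (1 + M) * κ ^ (-(p + 1)) * (1 + z.re ^ 2) ^ (-p) := by
        rw [Real.mul_rpow hκ.le hx.le, show -p = -(p + 1) + 1 by ring, Real.rpow_add_one hx.ne']
        ring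

theorem integral_cpow_add_mul_sq_add_mul_I {A D p s : ℝ} (hA : 0 < A) (hp : 1 / 2 < p)
    (hs : A * s ^ 2 < D) :
    ∫ x : ℝ, ((D : ℂ) + A * (x + s * I) ^ 2) ^ (-(p : ℂ))
      = ∫ x : ℝ, ((D : ℂ) + A * (x : ℂ) ^ 2) ^ (-(p : ℂ)) := by
  set D' := (A * s ^ 2 + D) / 2 with hD'
  set κ := min (D - D') A
  have hκ : 0 < κ := lt_min (by rw [hD']; linarith) hA
  set U : Set ℝ := {t | A * t ^ 2 < D'}
  have hU : IsOpen U := isOpen_lt (by fun_prop) continuous_const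
  have hsU : Set.uIcc 0 s ⊆ U := fun t ht ↦ by
    have : t ^ 2 ≤ s ^ 2 := sq_le_sq.2 (by simpa using Set.abs_sub_left_of_mem_uIcc ht)
    show A * t ^ 2 < D'
    nlinarith
  have hre : ∀ z : ℂ, z.im ∈ U → κ * (1 + z.re ^ 2) ≤ ((D : ℂ) + A * z ^ 2).re := fun z hz ↦ by
    have : A * z.im ^ 2 < D' := hz
    rw [re_ofReal_add_ofReal_mul_sq]
    nlinarith [min_le_left (D - D') A, min_le_right (D - D') A, sq_nonneg z.re]
  have hderiv : ∀ z : ℂ, z.im ∈ U →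
      HasDerivAt (fun z : ℂ ↦ ((D : ℂ) + A * z ^ 2) ^ (-(p : ℂ)))
        (-(p : ℂ) * ((D : ℂ) + A * z ^ 2) ^ (-(p : ℂ) - 1) * (A * (2 * z))) z := fun z hz ↦ by
    have hslit : (D : ℂ) + A * z ^ 2 ∈ slitPlane :=
      mem_slitPlane_iff.2 (.inl (by nlinarith [hre z hz]))
    simpa using (((hasDerivAt_pow 2 z).const_mul (A : ℂ)).const_add (D : ℂ)).cpow_const
      (c := -(p : ℂ)) hslit
  refine integral_add_mul_I_eq_of_differentiableOn hU hsU
    (fun z hz ↦ (hderiv z hz).differentiableAt.differentiableWithinAt)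
    ((integrable_one_add_sq_rpow_neg hp).const_mul (κ ^ (-p)))
    ((integrable_one_add_sq_rpow_neg hp).const_mul (2 * p * A * (1 + D' / A) * κ ^ (-(p + 1))))
    (fun z hz ↦ ?_) (fun z hz ↦ ?_)
  · calc ‖((D : ℂ) + A * z ^ 2) ^ (-(p : ℂ))‖ ≤ (κ * (1 + z.re ^ 2)) ^ (-p) :=
          norm_cpow_neg_le (by positivity) (hre z hz) (by linarith)
      _ = κ ^ (-p) * (1 + z.re ^ 2) ^ (-p) := Real.mul_rpow hκ.le (by positivity)
  · rw [(hderiv z hz).deriv]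
    exact norm_deriv_cpow_add_mul_sq_le hA (by linarith) hκ (hre z hz)
      ((le_div_iff₀' hA).2 (le_of_lt hz))

lemma integral_add_mul_sq_rpow_neg {A B D : ℝ} (hA : 0 < A) (hB : 0 < B) (hD : 0 < D) (p : ℝ) :
    ∫ x : ℝ, (D + A * x ^ 2) ^ (-p) =
      √(D * B / A) * D ^ (-p) * ∫ x : ℝ, (1 + B * x ^ 2) ^ (-p) := by
  set a := √(D * B / A)
  have ha : 0 < a := Real.sqrt_pos.2 (by positivity)
  have hAa : A * a ^ 2 = D * B := by
    rw [Real.sq_sqrt (by positivity)]; field_simp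
  have hscale : ∀ x : ℝ, (D + A * (a * x) ^ 2) ^ (-p) = D ^ (-p) * (1 + B * x ^ 2) ^ (-p) := by
    intro x
    rw [← Real.mul_rpow hD.le (by positivity)]
    congr 1
    linear_combination x ^ 2 * hAa
  have := Measure.integral_comp_mul_left (fun x : ℝ ↦ (D + A * x ^ 2) ^ (-p)) a
  simp only [hscale, integral_const_mul, smul_eq_mul, abs_inv, abs_of_pos ha] at this
  rw [mul_assoc, this, mul_inv_cancel_left₀ ha.ne']

theorem integral_cpow_one_add_mul_sq_sub_mul_I {A B p : ℝ} (hA : 0 < A) (hB : 0 < B)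
    (hp : 1 / 2 < p) (k : ℝ) :
    ∫ x : ℝ, (1 + (A : ℂ) * x ^ 2 - k * x * I) ^ (-(p : ℂ)) =
      ((√((1 + k ^ 2 / (4 * A)) * B / A) * (1 + k ^ 2 / (4 * A)) ^ (-p) *
        ∫ x : ℝ, (1 + B * x ^ 2) ^ (-p) : ℝ) : ℂ) := by
  set D := 1 + k ^ 2 / (4 * A)
  have hD : 0 < D := by positivity
  have hsquare : ∀ x : ℝ, (1 + (A : ℂ) * x ^ 2 - k * x * I) =
      D + A * (x + ((-(k / (2 * A)) : ℝ) : ℂ) * I) ^ 2 := by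
    intro x
    have hA' : (A : ℂ) ≠ 0 := ofReal_ne_zero.2 hA.ne'
    simp only [D]
    push_cast
    field_simp
    linear_combination (-4 * (k : ℂ) ^ 2) * I_sq
  simp_rw [hsquare]
  rw [integral_cpow_add_mul_sq_add_mul_I hA hp (by simp only [D]; field_simp; nlinarith),
    ← integral_add_mul_sq_rpow_neg hA hB hD, ← integral_complex_ofReal]
  congr 1 with x
  rw [ofReal_cpow (by positivity)]
  push_cast
  rfl

lemma qExp_nonneg (q x : ℝ) : 0 ≤ qExp q x := by
  unfold qExp
  split_ifs
  · exact (Real.exp_pos x).le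
  · exact Real.rpow_nonneg (le_max_right _ _) _

lemma qC_nonneg (q : ℝ) : 0 ≤ qC q := integral_nonneg fun _ ↦ qExp_nonneg q _

lemma qExp_neg_of_one_lt {q x : ℝ} (hq : 1 < q) (hx : 0 ≤ x) :
    qExp q (-x) = (1 + (q - 1) * x) ^ (-(1 / (q - 1))) := by
  have hr : 0 < q - 1 := by linarith
  rw [qExp, if_neg hq.ne', max_eq_left (by nlinarith), show 1 - q = -(q - 1) by ring, div_neg]
  ring_nf

lemma qC_eq_integral_of_one_lt {q : ℝ} (hq : 1 < q) :
    qC q = ∫ x : ℝ, (1 + (q - 1) * x ^ 2) ^ (-(1 / (q - 1))) := by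
  simp_rw [qC, qExp_neg_of_one_lt hq (sq_nonneg _)]

lemma qC_one : qC 1 = √π := by
  simp_rw [qC, qExp, if_pos, ← neg_one_mul (_ ^ 2), integral_gaussian]
  norm_num

lemma qC_pos {q : ℝ} (hq1 : 1 ≤ q) (hq3 : q < 3) : 0 < qC q := by
  rcases hq1.eq_or_lt with rfl | hq
  · rw [qC_one]; positivity
  rw [qC_eq_integral_of_one_lt hq]
  have hr : 0 < q - 1 := by linarith
  refine integral_pos_of_integrable_nonneg_nonzero (x := 0)
    (.rpow_const (by fun_prop) fun x ↦ .inl (by positivity))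
    (integrable_one_add_mul_sq_rpow_neg hr (by rw [lt_div_iff₀ hr]; linarith))
    (fun x ↦ by positivity) (by simp)

lemma qGaussian_mul_qExpC {q β : ℝ} (hq : 1 < q) (hβ : 0 ≤ β) (ξ x : ℝ) :
    (qGaussian q β x : ℂ) * qExpC q (I * x * ξ * ((qGaussian q β x ^ (q - 1) : ℝ) : ℂ)) =
      ((√β / qC q : ℝ) : ℂ) * (1 + ((q - 1) * β : ℝ) * x ^ 2
        - ((q - 1) * (√β / qC q) ^ (q - 1) * ξ : ℝ) * x * I) ^ (-((1 / (q - 1) : ℝ) : ℂ)) := by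
  set r := q - 1 with hr
  have hr0 : 0 < r := by linarith
  set c := √β / qC q
  have hc : 0 ≤ c := div_nonneg (Real.sqrt_nonneg β) (qC_nonneg q)
  set u := 1 + r * (β * x ^ 2)
  have hu : 0 < u := by positivity
  have hG : qGaussian q β x = c * u ^ (-(1 / r)) := by
    rw [qGaussian, qExp_neg_of_one_lt hq (by positivity)]
  have hGr : qGaussian q β x ^ r = c ^ r * u⁻¹ := by
    rw [hG, Real.mul_rpow hc (by positivity), ← Real.rpow_mul hu.le,
      show -(1 / r) * r = -1 by field_simp, Real.rpow_neg_one]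
  set k := r * c ^ r * ξ
  set W : ℂ := (u : ℂ) - (k : ℂ) * x * I
  have hW : W ≠ 0 := fun h ↦ by simpa [W, hu.ne'] using congrArg re h
  have hbase : 1 + (1 - (q : ℂ)) * (I * x * ξ * ((c ^ r * u⁻¹ : ℝ) : ℂ)) = (u⁻¹ : ℝ) * W := by
    have huC : (u : ℂ) ≠ 0 := ofReal_ne_zero.2 hu.ne'
    rw [show (q : ℂ) = r + 1 by simp [hr]]
    simp only [W, k]
    push_cast
    field_simp
    ring
  have hexp : (1 : ℂ) / (1 - q) = -((1 / r : ℝ) : ℂ) := by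
    rw [show (q : ℂ) = r + 1 by simp [hr]]
    push_cast
    ring
  rw [hGr, qExpC, if_neg hq.ne', hbase, hexp, ofReal_mul_cpow (inv_pos.2 hu) hW,
    ← ofReal_neg, ← ofReal_cpow (inv_nonneg.2 hu.le), Real.inv_rpow hu.le, ← Real.rpow_neg hu.le,
    neg_neg, hG]
  have hW' : W = 1 + ((r * β : ℝ) : ℂ) * x ^ 2 - (k : ℂ) * x * I := by
    simp only [W, u]; push_cast; ring
  have hcancel : u ^ (-(1 / r)) * u ^ (1 / r) = 1 := by
    rw [← Real.rpow_add hu, neg_add_cancel, Real.rpow_zero]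
  rw [← hW']
  have hcancel' := congrArg ((↑) : ℝ → ℂ) hcancel
  push_cast at hcancel' ⊢
  linear_combination ((c : ℂ) * W ^ (-(1 / (r : ℂ)))) * hcancel'

theorem qFourier_qGaussian_one {β : ℝ} (hβ : 0 < β) (ξ : ℝ) :
    qFourier 1 (qGaussian 1 β) ξ = (Real.exp (-(ξ ^ 2 / (4 * β))) : ℂ) := by
  have hintegrand : ∀ x : ℝ, (qGaussian 1 β x : ℂ) *
      qExpC 1 (I * x * ξ * ((qGaussian 1 β x ^ ((1 : ℝ) - 1) : ℝ) : ℂ)) =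
        ((√β / √π : ℝ) : ℂ) * (cexp (I * ξ * x) * cexp (-β * x ^ 2)) := fun x ↦ by
    simp only [qGaussian, qC_one, qExp, qExpC, if_true, sub_self, Real.rpow_zero]
    push_cast
    ring_nf
  have hsqrt : ((π : ℂ) / β) ^ (1 / 2 : ℂ) = ((√(π / β) : ℝ) : ℂ) := by
    rw [Real.sqrt_eq_rpow, ofReal_cpow (by positivity)]
    push_cast
    ring_nf
  rw [qFourier, funext hintegrand, integral_const_mul,
    fourierIntegral_gaussian (by simpa using hβ), hsqrt, Real.sqrt_div Real.pi_pos.le]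
  have hsβ : (√β : ℂ) ≠ 0 := ofReal_ne_zero.2 (Real.sqrt_pos.2 hβ).ne'
  push_cast
  field_simp

theorem qFourier_qGaussian_of_one_lt {q β : ℝ} (hq1 : 1 < q) (hq3 : q < 3) (hβ : 0 < β)
    (ξ : ℝ) :
    qFourier q (qGaussian q β) ξ = (((1 + (q - 1) * ξ ^ 2 / (4 * β ^ (2 - q) *
      qC q ^ (2 * (q - 1)))) ^ (-((3 - q) / (2 * (q - 1)))) : ℝ) : ℂ) := by
  have hC := qC_pos hq1.le hq3
  have hr : 0 < q - 1 := by linarith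
  rw [qFourier]
  simp_rw [qGaussian_mul_qExpC hq1 hβ.le ξ]
  rw [integral_const_mul, integral_cpow_one_add_mul_sq_sub_mul_I (by positivity) hr
    (by rw [lt_div_iff₀ hr]; linarith), ← qC_eq_integral_of_one_lt hq1, ← ofReal_mul]
  congr 1
  set r := q - 1
  set C := qC q
  have hc : ((√β / C) ^ r) ^ 2 = β ^ r / C ^ (2 * r) := by
    rw [← Real.rpow_mul_natCast (by positivity), mul_comm, Real.rpow_natCast_mul (by positivity),
      div_pow, Real.sq_sqrt hβ.le, Real.div_rpow hβ.le (by positivity), Real.rpow_mul hC.le,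
      Real.rpow_two]
  have hβr : β ^ (2 - q) = β / β ^ r := by
    rw [show 2 - q = 1 - r by ring, Real.rpow_sub hβ, Real.rpow_one]
  have hD : 1 + (r * (√β / C) ^ r * ξ) ^ 2 / (4 * (r * β)) =
      1 + r * ξ ^ 2 / (4 * β ^ (2 - q) * C ^ (2 * r)) := by
    rw [mul_pow, mul_pow, hc, hβr]
    field_simp
  rw [hD]
  set D := 1 + r * ξ ^ 2 / (4 * β ^ (2 - q) * C ^ (2 * r))
  have hD0 : 0 < D := by positivity
  rw [show D * r / (r * β) = D / β by field_simp, Real.sqrt_div hD0.le,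
    show -((3 - q) / (2 * r)) = 1 / 2 + -(1 / r) by field_simp; ring, Real.rpow_add hD0,
    ← Real.sqrt_eq_rpow]
  field_simp

end

/-- Corollary 3: for `1 ≤ q < 3`, `β > 0`, with `q₁ = z(q) = (1+q)/(3-q)` and
`β*(q) = (3-q)/(8β^{2-q}C_q^{2(q-1)})`, one has `F_q[G_q(β; ·)](ξ) = e_{q₁}^{-β*(q)ξ²}`
and `β*(q) > 0`. -/
theorem qFourier_qGaussian_is_qGaussian (q β q₁ βstar : ℝ) (hq1 : 1 ≤ q) (hq3 : q < 3)
    (hβ : 0 < β) (hq₁ : q₁ = (1 + q) / (3 - q))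
    (hβstar : βstar = (3 - q) / (8 * β ^ (2 - q) * qC q ^ (2 * (q - 1)))) :
    (∀ ξ : ℝ, qFourier q (qGaussian q β) ξ = ((qExp q₁ (-(βstar * ξ ^ 2)) : ℝ) : ℂ)) ∧
      0 < βstar := by
  have hC := qC_pos hq1 hq3
  have h3q : 0 < 3 - q := by linarith
  have hβstar_pos : 0 < βstar := by rw [hβstar]; positivity
  refine ⟨fun ξ ↦ ?_, hβstar_pos⟩
  rcases hq1.eq_or_lt with rfl | hq
  · rw [qFourier_qGaussian_one hβ, hq₁, hβstar, qExp, if_pos (by norm_num)]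
    congr 3
    norm_num
    ring
  · have hq₁' : q₁ - 1 = 2 * (q - 1) / (3 - q) := by rw [hq₁]; field_simp; ring
    rw [qFourier_qGaussian_of_one_lt hq hq3 hβ,
      qExp_neg_of_one_lt (by rw [← sub_pos, hq₁']; exact div_pos (by linarith) h3q)
        (by positivity), hq₁', hβstar]
    congr 3
    · field_simp
      ring
    · field_simp
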